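/- arXiv:2201.12228 — 4 statements merged into one kernel-verified Lean document; each statement's English description precedes it below -/
import Mathlib

section
/- Let Σ, Σ_ext, Σ_K be signature matrices (diagonal with ±1 entries) and suppose A = Σ Aᵀ Σ, Σ B₂ = -C₂ᵀ Σ_K, and Σ B₁ = -C₁ᵀ Σ_ext. If X solves AᵀX + XA - X B₂ B₂ᵀ X + C₁ᵀ C₁ = 0, then Y = Σ X Σ solves A Y + Y Aᵀ - Y C₂ᵀ C₂ Y + B₁ B₁ᵀ = 0. -/
open Matrix

/-- A signature matrix: diagonal with diagonal entries `±1`. -/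
def IsSignature {k : ℕ} (S : Matrix (Fin k) (Fin k) ℝ) : Prop :=
  S.IsDiag ∧ ∀ i, S i i = 1 ∨ S i i = -1

lemma sig_diag {k : ℕ} {S : Matrix (Fin k) (Fin k) ℝ} (h : IsSignature S) :
    S = Matrix.diagonal (fun i => S i i) := (h.1.diagonal_diag).symm

lemma sig_transpose {k : ℕ} {S : Matrix (Fin k) (Fin k) ℝ} (h : IsSignature S) :
    Sᵀ = S := by
  conv_lhs => rw [sig_diag h]
  rw [Matrix.diagonal_transpose, ← sig_diag h]

lemma sig_sq {k : ℕ} {S : Matrix (Fin k) (Fin k) ℝ} (h : IsSignature S) :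
    S * S = 1 := by
  conv_lhs => rw [sig_diag h, Matrix.diagonal_mul_diagonal]
  have h1 : ∀ i, S i i * S i i = 1 := fun i => by
    rcases h.2 i with h1 | h1 <;> simp [h1]
  simp [h1]

theorem stmt_3 {n p m : ℕ}
    (A : Matrix (Fin n) (Fin n) ℝ)
    (B₁ : Matrix (Fin n) (Fin p) ℝ) (C₁ : Matrix (Fin p) (Fin n) ℝ)
    (B₂ : Matrix (Fin n) (Fin m) ℝ) (C₂ : Matrix (Fin m) (Fin n) ℝ)
    (Sg : Matrix (Fin n) (Fin n) ℝ) (Sext : Matrix (Fin p) (Fin p) ℝ)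
    (SK : Matrix (Fin m) (Fin m) ℝ)
    (hSg : IsSignature Sg) (hSext : IsSignature Sext) (hSK : IsSignature SK)
    (hA : A = Sg * Aᵀ * Sg)
    (hB₂ : Sg * B₂ = -(C₂ᵀ * SK))
    (hB₁ : Sg * B₁ = -(C₁ᵀ * Sext))
    (X : Matrix (Fin n) (Fin n) ℝ)
    (hX : Aᵀ * X + X * A - X * B₂ * B₂ᵀ * X + C₁ᵀ * C₁ = 0) :
    A * (Sg * X * Sg) + (Sg * X * Sg) * Aᵀ - (Sg * X * Sg) * C₂ᵀ * C₂ * (Sg * X * Sg) +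
      B₁ * B₁ᵀ = 0 := by
  have hSg2 := sig_sq hSg
  have hSK2 := sig_sq hSK
  have hSext2 := sig_sq hSext
  have hSgT := sig_transpose hSg
  have hSKT := sig_transpose hSK
  have hSextT := sig_transpose hSext
  have hA2 : Aᵀ = Sg * A * Sg := by
    conv_lhs => rw [hA]
    simp [Matrix.transpose_mul, hSgT, Matrix.mul_assoc]
  have hC2t : C₂ᵀ = -(Sg * B₂ * SK) := by
    have := congrArg (· * SK) hB₂
    simp only [Matrix.neg_mul, Matrix.mul_assoc, hSK2, Matrix.mul_one] at this
    rw [← Matrix.mul_assoc] at this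
    rw [this, neg_neg]
  have hC2 : C₂ = -(SK * B₂ᵀ * Sg) := by
    have := congrArg Matrix.transpose hC2t
    simpa [Matrix.transpose_mul, hSgT, hSKT, Matrix.mul_assoc] using this
  have hB1 : B₁ = -(Sg * C₁ᵀ * Sext) := by
    have := congrArg (Sg * ·) hB₁
    simp only [← Matrix.mul_assoc, hSg2, Matrix.one_mul] at this
    rw [this]
    simp [Matrix.mul_assoc]
  have hB1t : B₁ᵀ = -(Sext * C₁ * Sg) := by
    rw [hB1]
    simp [Matrix.transpose_mul, hSgT, hSextT, Matrix.mul_assoc]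
  have hcg : ∀ M : Matrix (Fin n) (Fin n) ℝ, Sg * (Sg * M) = M := by
    intro M; rw [← Matrix.mul_assoc, hSg2, Matrix.one_mul]
  have hck : ∀ M : Matrix (Fin m) (Fin n) ℝ, SK * (SK * M) = M := by
    intro M; rw [← Matrix.mul_assoc, hSK2, Matrix.one_mul]
  have hce : ∀ M : Matrix (Fin p) (Fin n) ℝ, Sext * (Sext * M) = M := by
    intro M; rw [← Matrix.mul_assoc, hSext2, Matrix.one_mul]
  have key : A * (Sg * X * Sg) + (Sg * X * Sg) * Aᵀ -
      (Sg * X * Sg) * C₂ᵀ * C₂ * (Sg * X * Sg) + B₁ * B₁ᵀ =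
      Sg * (Aᵀ * X + X * A - X * B₂ * B₂ᵀ * X + C₁ᵀ * C₁) * Sg := by
    rw [hC2t, hC2, hB1t, hB1, hA2]
    simp only [Matrix.mul_add, Matrix.add_mul, Matrix.mul_sub, Matrix.sub_mul,
      Matrix.neg_mul, Matrix.mul_neg, neg_neg, Matrix.mul_assoc, hcg, hck, hce,
      hSg2, Matrix.mul_one]
  rw [key, hX, Matrix.mul_zero, Matrix.zero_mul]
end

section
/- If D and K are real symmetric positive semidefinite n×n matrices, then I + D K is invertible. -/
open Matrix

namespace Matrix.PosSemidef

open scoped ComplexOrder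

variable {𝕜 n : Type*} [RCLike 𝕜] [Fintype n] {D K : Matrix n n 𝕜}

/- Pair the equation with `K x`: the two resulting terms `x⋆ K x` and `(K x)⋆ D (K x)` are
both nonnegative, so `x⋆ K x = 0`. -/
theorem mulVec_eq_zero_of_add_mulVec_mulVec_eq_zero (hD : D.PosSemidef) (hK : K.PosSemidef)
    {x : n → 𝕜} (hx : x + D *ᵥ K *ᵥ x = 0) : K *ᵥ x = 0 := by
  have hKx : star (K *ᵥ x) ⬝ᵥ x = star x ⬝ᵥ K *ᵥ x := by
    rw [star_mulVec, hK.1.eq, ← dotProduct_mulVec]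
  have hsum : star x ⬝ᵥ K *ᵥ x + star (K *ᵥ x) ⬝ᵥ D *ᵥ K *ᵥ x = 0 := by
    rw [← hKx, ← dotProduct_add, hx, dotProduct_zero]
  have hquad : star x ⬝ᵥ K *ᵥ x = 0 :=
    ((add_eq_zero_iff_of_nonneg (hK.dotProduct_mulVec_nonneg x)
      (hD.dotProduct_mulVec_nonneg _)).1 hsum).1
  exact (hK.dotProduct_mulVec_zero_iff x).1 hquad

theorem isUnit_one_add_mul [DecidableEq n] (hD : D.PosSemidef) (hK : K.PosSemidef) :
    IsUnit (1 + D * K) := by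
  rw [← mulVec_injective_iff_isUnit, ← coe_mulVecLin, injective_iff_map_eq_zero]
  intro x hx
  rw [mulVecLin_apply, add_mulVec, one_mulVec, ← mulVec_mulVec] at hx
  rwa [hD.mulVec_eq_zero_of_add_mulVec_mulVec_eq_zero hK hx, mulVec_zero, add_zero] at hx

end Matrix.PosSemidef

theorem stmt_6 {n : ℕ}
    (D K : Matrix (Fin n) (Fin n) ℝ)
    (hD : D.PosSemidef) (hK : K.PosSemidef) :
    IsUnit (1 + D * K) :=
  hD.isUnit_one_add_mul hK
end

section
/- Let A ∈ ℝ^{m×n} and C ∈ ℝ^{p×n} with C surjective (right invertible) and the stacked matrix [A; C] injective (left invertible). Then the KKT matrix [[-AᵀA, -Cᵀ],[C, 0]] is invertible. -/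
open Matrix

theorem stmt_12 {m n p : ℕ}
    (A : Matrix (Fin m) (Fin n) ℝ) (C : Matrix (Fin p) (Fin n) ℝ)
    (hC : Function.Surjective C.mulVecLin)
    (hAC : Function.Injective (Matrix.fromRows A C).mulVecLin) :
    IsUnit (Matrix.fromBlocks (-(Aᵀ * A)) (-Cᵀ) C (0 : Matrix (Fin p) (Fin p) ℝ)) := by
  rw [← Matrix.mulVec_injective_iff_isUnit]
  have hker : ∀ v : Fin n ⊕ Fin p → ℝ,
      (Matrix.fromBlocks (-(Aᵀ * A)) (-Cᵀ) C (0 : Matrix (Fin p) (Fin p) ℝ)) *ᵥ v = 0 →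
      v = 0 := by
    intro v hv
    set x : Fin n → ℝ := v ∘ Sum.inl with hx
    set y : Fin p → ℝ := v ∘ Sum.inr with hy
    rw [Matrix.fromBlocks_mulVec] at hv
    have h1 : (-(Aᵀ * A)) *ᵥ x + (-Cᵀ) *ᵥ y = 0 := by
      funext i; exact congrFun hv (Sum.inl i)
    have h2 : C *ᵥ x = 0 := by
      funext i
      have := congrFun hv (Sum.inr i)
      simpa using this
    have h1' : Aᵀ *ᵥ (A *ᵥ x) + Cᵀ *ᵥ y = 0 := by
      funext j
      have := congrFun h1 j
      simp only [Matrix.neg_mulVec, ← Matrix.mulVec_mulVec, Pi.add_apply, Pi.neg_apply,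
        Pi.zero_apply] at this ⊢
      linarith
    have hdot : (A *ᵥ x) ⬝ᵥ (A *ᵥ x) + (C *ᵥ x) ⬝ᵥ y = 0 := by
      have := congrArg (fun w => x ⬝ᵥ w) h1'
      simp only [dotProduct_add, dotProduct_mulVec, vecMul_transpose, dotProduct_zero] at this
      rw [← dotProduct_mulVec] at this
      simpa using this
    rw [h2] at hdot
    simp only [zero_dotProduct, add_zero] at hdot
    have hAx : A *ᵥ x = 0 := dotProduct_self_eq_zero.mp hdot
    have hxz : x = 0 := by
      apply hAC
      simp only [mulVecLin_apply, map_zero]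
      rw [Matrix.fromRows_mulVec]
      funext i
      rcases i with i | i <;> simp [hAx, h2]
    have hCty : Cᵀ *ᵥ y = 0 := by
      have := h1'
      rw [hxz] at this
      simpa using this
    have hyz : y = 0 := by
      funext i
      obtain ⟨w, hw⟩ := hC (Pi.single i 1)
      have hz : y ⬝ᵥ (C *ᵥ w) = 0 := by
        rw [dotProduct_mulVec, ← mulVec_transpose, hCty]
        simp
      rw [show C *ᵥ w = Pi.single i 1 from hw] at hz
      simpa using hz
    funext i
    rcases i with i | i
    · exact congrFun hxz i
    · exact congrFun hyz i
  intro a b hab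
  have := hker (a - b) (by rw [Matrix.mulVec_sub, hab, sub_self])
  exact sub_eq_zero.mp this
end

section
/- Let A ∈ ℝ^{n×n} be skew-symmetric, B ∈ ℝ^{n×m}, and suppose the pair (A, B) is controllable. Then every eigenvalue of A - √2·B Bᵀ (as a complex matrix) has strictly negative real part. -/
open Matrix

-- aux: left null space trivial when rank = n
lemma left_null {n : ℕ} {N : Type*} [Fintype N] (C : Matrix (Fin n) N ℝ) (h : C.rank = n)
    (x : Fin n → ℝ) (hx : x ᵥ* C = 0) : x = 0 := by
  have htop : LinearMap.range C.mulVecLin = ⊤ := by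
    apply Submodule.eq_top_of_finrank_eq
    have : Module.finrank ℝ (↥(LinearMap.range C.mulVecLin)) = C.rank := rfl
    rw [this, h]
    simp
  have hx' : ∀ z : Fin n → ℝ, x ⬝ᵥ z = 0 := by
    intro z
    obtain ⟨y, hy⟩ := (LinearMap.range_eq_top.1 htop) z
    rw [← hy]
    have : C.mulVecLin y = C *ᵥ y := rfl
    rw [this, dotProduct_mulVec, hx, zero_dotProduct]
  have := hx' x
  exact (dotProduct_self_eq_zero).1 this

theorem stmt_16 {n m : ℕ}
    (A : Matrix (Fin n) (Fin n) ℝ) (B : Matrix (Fin n) (Fin m) ℝ)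
    (hA : A = -Aᵀ)
    (hctrb : (Matrix.of fun (i : Fin n) (kj : Fin n × Fin m) =>
        (A ^ (kj.1 : ℕ) * B) i kj.2).rank = n) :
    ∀ μ ∈ spectrum ℂ ((A - Real.sqrt 2 • (B * Bᵀ)).map (Complex.ofReal)),
      μ.re < 0 := by
  classical
  intro μ hμ
  set c : ℝ := Real.sqrt 2 with hc
  have hcpos : 0 < c := Real.sqrt_pos.2 (by norm_num)
  set M' : Matrix (Fin n) (Fin n) ℂ := (A - c • (B * Bᵀ)).map Complex.ofReal with hM'
  -- extract eigenvector
  rw [spectrum.mem_iff] at hμ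
  rw [Matrix.isUnit_iff_isUnit_det, isUnit_iff_ne_zero, not_not] at hμ
  obtain ⟨v, hv0, hv⟩ := Matrix.exists_mulVec_eq_zero_iff.2 hμ
  have heig : M' *ᵥ v = μ • v := by
    have h1 : (algebraMap ℂ (Matrix (Fin n) (Fin n) ℂ) μ - M') *ᵥ v = 0 := hv
    rw [Matrix.sub_mulVec] at h1
    have h2 : (algebraMap ℂ (Matrix (Fin n) (Fin n) ℂ) μ) *ᵥ v = μ • v := by
      simp [Matrix.algebraMap_eq_diagonal, Matrix.diagonal_mulVec_single]
      ext i
      simp [Matrix.mulVec, Matrix.diagonal, dotProduct, Pi.algebraMap_apply]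
    rw [h2] at h1
    linear_combination (norm := module) -h1
  set A' : Matrix (Fin n) (Fin n) ℂ := A.map Complex.ofReal with hA'
  set B' : Matrix (Fin n) (Fin m) ℂ := B.map Complex.ofReal with hB'
  have hMdec : M' = A' - (c:ℂ) • (B' * B'ᵀ) := by
    ext i j
    simp [hM', hA', hB', Matrix.map_apply, Matrix.sub_apply, Matrix.smul_apply,
      Matrix.mul_apply, Complex.ofReal_sub, Complex.ofReal_mul, Complex.ofReal_sum,
      Matrix.transpose_apply, Finset.mul_sum]
  -- skewness over ℂ
  have hAskew : A'ᵀ = -A' := by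
    ext i j
    simp [hA', Matrix.map_apply, Matrix.transpose_apply]
    rw [show A j i = (-Aᵀ) j i from by rw [← hA]]
    simp
  -- real-entried matrices commute with star on vectors
  have hstar : ∀ {k l : ℕ} (X : Matrix (Fin k) (Fin l) ℝ) (z : Fin l → ℂ),
      (X.map Complex.ofReal) *ᵥ (star z) = star ((X.map Complex.ofReal) *ᵥ z) := by
    intro k l X z
    ext i
    simp [Matrix.mulVec, dotProduct, Matrix.map_apply, map_sum]
  have hB'T : B'ᵀ = Bᵀ.map Complex.ofReal := by rw [hB', Matrix.transpose_map]
  set w : Fin m → ℂ := B'ᵀ *ᵥ v with hw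
  -- dot product with star
  have hdp : ∀ {k : ℕ} (z : Fin k → ℂ),
      star z ⬝ᵥ z = ((∑ i, Complex.normSq (z i) : ℝ) : ℂ) := by
    intro k z
    rw [Complex.ofReal_sum]
    apply Finset.sum_congr rfl
    intro i _
    simp [Complex.normSq_eq_conj_mul_self]
  -- z := star v ⬝ᵥ A' *ᵥ v has zero real part
  have hzre : (star v ⬝ᵥ (A' *ᵥ v)).re = 0 := by
    have hconj : (starRingEnd ℂ) (star v ⬝ᵥ (A' *ᵥ v)) = -(star v ⬝ᵥ (A' *ᵥ v)) := by
      have h1 : (starRingEnd ℂ) (star v ⬝ᵥ (A' *ᵥ v)) = v ⬝ᵥ star (A' *ᵥ v) := by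
        simp [dotProduct, map_sum]
      rw [h1, ← hstar A v, Matrix.dotProduct_mulVec]
      have h2 : v ᵥ* A' = -(A' *ᵥ v) := by
        rw [← Matrix.mulVec_transpose, hAskew, Matrix.neg_mulVec]
      rw [h2, neg_dotProduct, dotProduct_comm]
    have h3 : ((2 * (star v ⬝ᵥ (A' *ᵥ v)).re : ℝ) : ℂ) = 0 := by
      rw [← Complex.add_conj, hconj]; ring
    have h4 := Complex.ofReal_eq_zero.1 h3
    linarith
  -- quadratic term
  have hq : star v ⬝ᵥ ((B' * B'ᵀ) *ᵥ v) = star w ⬝ᵥ w := by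
    rw [← Matrix.mulVec_mulVec, Matrix.dotProduct_mulVec]
    congr 1
    rw [← Matrix.mulVec_transpose, hB'T, hstar, ← hB'T]
  set sr : ℝ := ∑ i, Complex.normSq (v i) with hsr
  set qr : ℝ := ∑ i, Complex.normSq (w i) with hqr
  have hsrpos : 0 < sr := by
    rcases Function.ne_iff.1 hv0 with ⟨i, hi⟩
    apply Finset.sum_pos' (fun j _ => Complex.normSq_nonneg _)
    exact ⟨i, Finset.mem_univ i, Complex.normSq_pos.2 hi⟩
  have hqrnn : 0 ≤ qr := Finset.sum_nonneg fun j _ => Complex.normSq_nonneg _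
  have heq : star v ⬝ᵥ (A' *ᵥ v) - (c:ℂ) * (qr:ℂ) = μ * (sr:ℂ) := by
    have h1 : star v ⬝ᵥ (M' *ᵥ v) = star v ⬝ᵥ (μ • v) := by rw [heig]
    rw [hMdec, Matrix.sub_mulVec, Matrix.smul_mulVec,
      dotProduct_sub, dotProduct_smul, hq, hdp] at h1
    rw [dotProduct_smul, hdp] at h1
    simpa [smul_eq_mul, hqr, hsr] using h1
  have hre : -(c * qr) = μ.re * sr := by
    have h2 := congrArg Complex.re heq
    simp only [Complex.sub_re, Complex.mul_re, Complex.ofReal_re, Complex.ofReal_im,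
      hzre, mul_zero, sub_zero, zero_sub] at h2
    linarith
  rcases lt_or_eq_of_le hqrnn with hqrpos | hqrzero
  · nlinarith
  · -- qr = 0 : contradiction with controllability
    exfalso
    have hw0 : w = 0 := by
      have h3 : ∀ i ∈ Finset.univ, Complex.normSq (w i) = 0 := by
        rw [← Finset.sum_eq_zero_iff_of_nonneg (fun j _ => Complex.normSq_nonneg _)]
        exact hqrzero.symm
      funext i
      exact Complex.normSq_eq_zero.1 (h3 i (Finset.mem_univ i))
    have heigA : A' *ᵥ v = μ • v := by
      rw [hMdec, Matrix.sub_mulVec, Matrix.smul_mulVec,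
        ← Matrix.mulVec_mulVec, ← hw, hw0] at heig
      simpa using heig
    have hstarB : star v ᵥ* B' = 0 := by
      rw [← Matrix.mulVec_transpose, hB'T, hstar, ← hB'T, ← hw, hw0, star_zero]
    have hvecA : star v ᵥ* A' = (-(starRingEnd ℂ μ)) • star v := by
      rw [← Matrix.mulVec_transpose, hAskew, Matrix.neg_mulVec, hA', hstar, ← hA', heigA,
        star_smul]
      ext i
      simp
    have hvec : ∀ k : ℕ, star v ᵥ* (A' ^ k) = ((-(starRingEnd ℂ μ)) ^ k) • star v := by
      intro k
      induction k with
      | zero => simp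
      | succ k ih =>
        rw [pow_succ, ← Matrix.vecMul_vecMul, ih, Matrix.smul_vecMul, hvecA, pow_succ,
          smul_smul]
    have hcol : ∀ k : ℕ, star v ᵥ* (A' ^ k * B') = 0 := by
      intro k
      rw [← Matrix.vecMul_vecMul, hvec, Matrix.smul_vecMul, hstarB, smul_zero]
    have hmul : ∀ {p q r : ℕ} (X : Matrix (Fin p) (Fin q) ℝ) (Y : Matrix (Fin q) (Fin r) ℝ),
        (X * Y).map Complex.ofReal = X.map Complex.ofReal * Y.map Complex.ofReal := by
      intro p q r X Y
      ext i j
      simp [Matrix.mul_apply, Matrix.map_apply]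
    have hpow : ∀ k : ℕ, (A ^ k).map Complex.ofReal = A' ^ k := by
      intro k
      induction k with
      | zero =>
        simp only [pow_zero]
        exact Matrix.map_one _ Complex.ofReal_zero Complex.ofReal_one
      | succ k ih =>
        rw [pow_succ, pow_succ, ← ih, hA', hmul]
    have hmapk : ∀ k : ℕ, (A ^ k * B).map Complex.ofReal = A' ^ k * B' := by
      intro k
      rw [hmul, hpow, hB']
    set u : Fin n → ℂ := star v with hu
    set C : Matrix (Fin n) (Fin n × Fin m) ℝ :=
      Matrix.of fun (i : Fin n) (kj : Fin n × Fin m) => (A ^ (kj.1 : ℕ) * B) i kj.2 with hC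
    have hkey : ∀ kj : Fin n × Fin m, ∑ i, u i * ((C i kj : ℝ) : ℂ) = 0 := by
      intro kj
      have h5 := congrFun (hcol (kj.1 : ℕ)) kj.2
      rw [← hmapk] at h5
      simpa [Matrix.vecMul, dotProduct, Matrix.map_apply, hC] using h5
    have hxre : (fun i => (u i).re) ᵥ* C = 0 := by
      funext kj
      have h6 := congrArg Complex.re (hkey kj)
      simpa [Matrix.vecMul, dotProduct, Complex.mul_re, map_sum] using h6
    have hxim : (fun i => (u i).im) ᵥ* C = 0 := by
      funext kj
      have h6 := congrArg Complex.im (hkey kj)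
      simpa [Matrix.vecMul, dotProduct, Complex.mul_im, map_sum] using h6
    have hre0 := left_null C hctrb _ hxre
    have him0 := left_null C hctrb _ hxim
    apply hv0
    funext i
    have h7 : u i = 0 := by
      apply Complex.ext
      · exact congrFun hre0 i
      · exact congrFun him0 i
    have : star (u i) = 0 := by rw [h7, star_zero]
    simpa [hu] using this
end
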